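/- arXiv:2503.08274 — 4 statements merged into one kernel-verified Lean document; each statement's English description precedes it below -/
import Mathlib

section
/- Let α > 0, β > 0 and γ ∈ ℝ. Then for every z ∈ ℂ the series ∑_{m=0}^∞ (γ)_m z^m / (Γ(αm+β) m!) defining the generalized (Prabhakar) Mittag-Leffler function E_{α,β}^γ(z) converges absolutely (the family of terms is summable); in particular E_{α,β}^γ is defined on all of ℂ. -/
/-!
Since `|γ + i| ≤ (|γ| + 1) (i + 1)`, the rising factorial satisfies `|(γ)ₘ| ≤ (|γ| + 1)ᵐ m!`, so the
`m`-th term is bounded by `((|γ| + 1) |z|)ᵐ / Γ(αm + β)`. These bounds are summable because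
`Γ(αm + β)` grows faster than any geometric sequence: by monotonicity of `Γ` on `[2, ∞)` it is at
least `n!` for `n = ⌊αm + β - 1⌋₊`, and `n` grows linearly in `m`.
-/

open Filter Nat

theorem Real.factorial_le_Gamma {n : ℕ} {x : ℝ} (hn : 1 ≤ n) (hx : (n : ℝ) + 1 ≤ x) :
    (n ! : ℝ) ≤ Real.Gamma x := by
  have h2 : (2 : ℝ) ≤ n + 1 := by norm_cast; omega
  rw [← Real.Gamma_nat_eq_factorial]
  exact Real.Gamma_strictMonoOn_Ici.monotoneOn h2 (h2.trans hx) hx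

theorem eventually_pow_le_Gamma_mul_add {α : ℝ} (hα : 0 < α) (β S : ℝ) :
    ∀ᶠ m : ℕ in atTop, S ^ m ≤ Real.Gamma (α * m + β) := by
  obtain ⟨k, hk⟩ := exists_nat_ge α⁻¹
  set B : ℝ := max 1 |S|
  set e : ℕ := ⌈2 - β⌉₊
  set n : ℕ → ℕ := fun m => ⌊α * m + (β - 1)⌋₊
  have hn : Tendsto n atTop atTop :=
    tendsto_nat_floor_atTop.comp <|
      ((tendsto_natCast_atTop_atTop.const_mul_atTop hα).atTop_add tendsto_const_nhds)
  filter_upwards [hn.eventually_ge_atTop 1,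
    hn.eventually (FloorSemiring.eventually_mul_pow_lt_factorial_sub ((B ^ k) ^ e) (B ^ k) 0)]
    with m hn1 hfac
  have hx1 : 1 ≤ α * m + (β - 1) := (one_le_floor_iff _).mp hn1
  have hnx : (n m : ℝ) ≤ α * m + (β - 1) := Nat.floor_le (by linarith)
  have hxn : α * m + (β - 1) < n m + 1 := Nat.lt_floor_add_one _
  have hm : m ≤ k * (n m + e) := by
    have hkα : 1 ≤ k * α := by rwa [inv_le_iff_one_le_mul₀ hα] at hk
    have he : 2 - β ≤ e := Nat.le_ceil _
    have : (m : ℝ) ≤ k * (n m + e) := by nlinarith [(Nat.cast_nonneg m : (0 : ℝ) ≤ m)]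
    exact_mod_cast this
  calc S ^ m ≤ |S| ^ m := (le_abs_self _).trans (abs_pow S m).le
    _ ≤ B ^ m := pow_le_pow_left₀ (abs_nonneg S) (le_max_right _ _) m
    _ ≤ B ^ (k * (n m + e)) := pow_le_pow_right₀ (le_max_left _ _) hm
    _ = (B ^ k) ^ e * (B ^ k) ^ n m := by ring
    _ ≤ (n m)! := by simpa using hfac.le
    _ ≤ Real.Gamma (α * m + β) := Real.factorial_le_Gamma hn1 (by linarith)

theorem summable_pow_div_Gamma_mul_add {α : ℝ} (hα : 0 < α) (β R : ℝ) :
    Summable (fun m : ℕ => R ^ m / Real.Gamma (α * m + β)) := by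
  set S := |R| + 1
  have hS : 0 < S := by positivity
  refine Summable.of_norm_bounded_eventually_nat
    (summable_geometric_of_lt_one (by positivity) ((div_lt_one hS).mpr (lt_add_one |R|))) ?_
  filter_upwards [eventually_pow_le_Gamma_mul_add hα β S] with m hm
  rw [norm_div, norm_pow, Real.norm_eq_abs, Real.norm_eq_abs,
    abs_of_pos ((pow_pos hS m).trans_le hm), div_pow]
  exact div_le_div_of_nonneg_left (by positivity) (pow_pos hS m) hm

theorem abs_prod_range_add_le (γ : ℝ) (m : ℕ) :
    |∏ i ∈ Finset.range m, (γ + i)| ≤ (|γ| + 1) ^ m * (m ! : ℝ) := by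
  rw [Finset.abs_prod, ← Finset.prod_range_add_one_eq_factorial, Nat.cast_prod,
    ← Finset.card_range m, ← Finset.prod_const, Finset.card_range, ← Finset.prod_mul_distrib]
  refine Finset.prod_le_prod (fun i _ => abs_nonneg _) fun i _ => ?_
  calc |γ + i| ≤ |γ| + i := (abs_add_le _ _).trans_eq (by rw [Nat.abs_cast])
    _ ≤ (|γ| + 1) * ((i + 1 : ℕ) : ℝ) := by push_cast; nlinarith [abs_nonneg γ, i.cast_nonneg (α := ℝ)]

theorem prabhakar_mittagLeffler_summable_general (α β γ : ℝ) (hα : 0 < α)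
    (z : ℂ) :
    Summable (fun m : ℕ =>
      (((∏ i ∈ Finset.range m, (γ + i)) : ℝ) : ℂ) * z ^ m /
        ((Real.Gamma (α * m + β) : ℂ) * (Nat.factorial m : ℂ))) := by
  refine Summable.of_norm_bounded_eventually_nat
    (summable_pow_div_Gamma_mul_add hα β ((|γ| + 1) * ‖z‖)) ?_
  filter_upwards [eventually_pow_le_Gamma_mul_add hα β 1] with m hm
  have hΓ : 0 < Real.Gamma (α * m + β) := one_pos.trans_le (by simpa using hm)
  rw [norm_div, norm_mul, norm_mul, norm_pow, Complex.norm_real, Complex.norm_real,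
    Complex.norm_natCast, Real.norm_eq_abs, Real.norm_eq_abs, abs_of_pos hΓ,
    div_le_div_iff₀ (by positivity) hΓ, mul_pow]
  calc |∏ i ∈ Finset.range m, (γ + i)| * ‖z‖ ^ m * Real.Gamma (α * m + β)
      ≤ (|γ| + 1) ^ m * m ! * ‖z‖ ^ m * Real.Gamma (α * m + β) := by
        gcongr; exact abs_prod_range_add_le γ m
    _ = (|γ| + 1) ^ m * ‖z‖ ^ m * (Real.Gamma (α * m + β) * m !) := by ring

/-- For `α > 0`, `β > 0`, `γ ∈ ℝ` and every `z ∈ ℂ`, the series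
`∑ₘ (γ)ₘ zᵐ / (Γ(αm+β) m!)` defining the generalized (Prabhakar)
Mittag-Leffler function converges absolutely (the family of terms is summable).
Here `(γ)ₘ = ∏_{i<m} (γ + i)` is the rising factorial. -/
theorem prabhakar_mittagLeffler_summable (α β γ : ℝ) (hα : 0 < α) (hβ : 0 < β)
    (z : ℂ) :
    Summable (fun m : ℕ =>
      (((∏ i ∈ Finset.range m, (γ + i)) : ℝ) : ℂ) * z ^ m /
        ((Real.Gamma (α * m + β) : ℂ) * (Nat.factorial m : ℂ))) :=
  prabhakar_mittagLeffler_summable_general α β γ hα z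
end

section
/- Let α₁, α₂, α₃, α₄, β₁, β₂, β₃ be positive reals and γ₁, γ₂, δ₁, δ₂, δ₃ positive reals. If Δ₁ = α₃ + α₄ − α₁ − α₂ > 0 and Δ₂ = β₂ + β₃ − β₁ > 0, then for every x, y ∈ ℂ the double series ∑_{m=0}^∞ ∑_{k=0}^∞ [Γ(α₁m+β₁k+γ₁) Γ(α₂m+γ₂) / (Γ(γ₁) Γ(γ₂) Γ(α₃m+β₂k+δ₁))] · x^m/Γ(α₄m+δ₂) · y^k/Γ(β₃k+δ₃) converges absolutely (the doubly-indexed family of terms is summable over ℕ × ℕ). -/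
/-!
Stirling's formula in the crude form `log Γ(t) = t log t + O(t)`, uniformly for `t ≥ c > 0`,
shows that for an affine form `t = a m + b k + d` one has `log Γ(t) = t log N + O(N)` with
`N = m + k + 1`. Summing these over the five Gamma factors of the coefficient of `x ^ m y ^ k`,
the terms `t log N` add up to at most `-(Δ₁ m + Δ₂ k) log N + O(log N)`, so the coefficient is
`exp (O(N) - δ (m + k) log N)` with `δ = min Δ₁ Δ₂ > 0`. Such coefficients decay faster than
any geometric sequence, and the series is dominated by `∑ 2⁻ᵐ 2⁻ᵏ`.
-/

open Real Filter Set
open scoped Nat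

namespace Real

theorem abs_log_Gamma_sub_mul_log_le_of_two_le {t : ℝ} (ht : 2 ≤ t) :
    |log (Gamma t) - t * log t| ≤ 3 * t := by
  set n := ⌊t⌋₊
  have hnt : (n : ℝ) ≤ t := Nat.floor_le (by linarith)
  have htn : t < n + 1 := Nat.lt_floor_add_one t
  have hn : (2 : ℝ) ≤ n := by exact_mod_cast Nat.le_floor (by exact_mod_cast ht)
  have hn0 : (0 : ℝ) < n := by linarith
  have ht0 : 0 < t := by linarith
  have hGamma_n : log (Gamma n) ≤ log (Gamma t) := log_le_log (Gamma_pos_of_pos hn0) <|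
    Gamma_strictMonoOn_Ici.monotoneOn (mem_Ici.2 hn) (mem_Ici.2 ht) hnt
  have hGamma_t : log (Gamma t) ≤ log (n ! : ℝ) := by
    rw [← Gamma_nat_eq_factorial]
    exact log_le_log (Gamma_pos_of_pos ht0) <|
      Gamma_strictMonoOn_Ici.monotoneOn (mem_Ici.2 ht) (mem_Ici.2 (by linarith)) htn.le
  have hfact : log (n ! : ℝ) = log n + log (Gamma n) := by
    rw [← Gamma_nat_eq_factorial, Gamma_add_one hn0.ne',
      log_mul hn0.ne' (Gamma_pos_of_pos hn0).ne']
  have hlog_n : log n ≤ log t := log_le_log hn0 hnt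
  have hlog_t : log t ≤ t := (log_le_sub_one_of_pos ht0).trans (by linarith)
  have hlog_n0 : 0 ≤ log n := log_nonneg (by linarith)
  rw [abs_le]
  constructor
  · have hstirling := Stirling.le_log_factorial_stirling (n := n) (by exact_mod_cast hn0.ne')
    have h2pi : 0 ≤ log (2 * π) := log_nonneg (by linarith [pi_gt_three])
    have hquot : n * (log t - log n) ≤ t - n := by
      rw [← log_div ht0.ne' hn0.ne']
      calc n * log (t / n) ≤ n * (t / n - 1) :=
            mul_le_mul_of_nonneg_left (log_le_sub_one_of_pos (div_pos ht0 hn0)) hn0.le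
        _ = t - n := by field_simp
    nlinarith [mul_le_mul_of_nonneg_right (by linarith : t - n ≤ 1) (log_nonneg (by linarith) :
      0 ≤ log t)]
  · have hpow : log (n ! : ℝ) ≤ n * log n := by
      rw [← log_pow]
      exact log_le_log (by positivity) (by exact_mod_cast Nat.factorial_le_pow n)
    nlinarith [mul_le_mul hnt hlog_n hlog_n0 ht0.le]

theorem exists_abs_log_Gamma_sub_mul_log_le {c : ℝ} (hc : 0 < c) :
    ∃ C, ∀ t, c ≤ t → |log (Gamma t) - t * log t| ≤ C * (t + 1) := by
  have hcont : ContinuousOn (fun t => log (Gamma t) - t * log t) (Icc c 2) := by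
    have hpos : ∀ t ∈ Icc c 2, 0 < t := fun t ht => hc.trans_le ht.1
    have hGamma : ContinuousOn Gamma (Icc c 2) :=
      differentiableOn_Gamma_Ioi.continuousOn.mono hpos
    exact (hGamma.log fun t ht => (Gamma_pos_of_pos (hpos t ht)).ne').sub
      (continuousOn_id.mul (continuousOn_id.log fun t ht => (hpos t ht).ne'))
  obtain ⟨C, hC⟩ := isCompact_Icc.exists_bound_of_continuousOn hcont
  refine ⟨max C 3, fun t ht => ?_⟩
  rcases le_total t 2 with ht2 | ht2
  · calc |log (Gamma t) - t * log t| ≤ C := hC t ⟨ht, ht2⟩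
      _ ≤ max C 3 := le_max_left _ _
      _ ≤ max C 3 * (t + 1) := le_mul_of_one_le_right (by positivity) (by linarith)
  · calc |log (Gamma t) - t * log t| ≤ 3 * t := abs_log_Gamma_sub_mul_log_le_of_two_le ht2
      _ ≤ max C 3 * (t + 1) := by nlinarith [le_max_right C 3]

theorem abs_mul_log_sub_mul_log_le {t N A : ℝ} (ht : 0 < t) (hN : 0 < N) (htN : t ≤ A * N) :
    |t * log t - t * log N| ≤ (A ^ 2 + 1) * N := by
  have hA : 0 ≤ A := nonneg_of_mul_nonneg_left (ht.le.trans htN) hN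
  have hsplit : t * log t - t * log N = t * log (t / N) := by
    rw [log_div ht.ne' hN.ne']; ring
  rw [hsplit, abs_le]
  constructor
  · calc -((A ^ 2 + 1) * N) ≤ t * (1 - (t / N)⁻¹) := by
          rw [inv_div, mul_sub, mul_div_cancel₀ _ ht.ne']; nlinarith
      _ ≤ t * log (t / N) :=
          mul_le_mul_of_nonneg_left (one_sub_inv_le_log_of_pos (div_pos ht hN)) ht.le
  · calc t * log (t / N) ≤ t * (t / N - 1) :=
          mul_le_mul_of_nonneg_left (log_le_sub_one_of_pos (div_pos ht hN)) ht.le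
      _ ≤ (A ^ 2 + 1) * N := by
          rw [mul_sub, mul_div_assoc', sub_le_iff_le_add, div_le_iff₀ hN]; nlinarith

end Real

theorem exists_abs_log_Gamma_affine_sub_le {a b d : ℝ} (ha : 0 ≤ a) (hb : 0 ≤ b) (hd : 0 < d) :
    ∃ K, ∀ m k : ℕ, |log (Gamma (a * m + b * k + d)) - (a * m + b * k + d) * log (m + k + 1)|
      ≤ K * (m + k + 1) := by
  obtain ⟨C, hC⟩ := exists_abs_log_Gamma_sub_mul_log_le hd
  set A := a + b + d
  refine ⟨C * (A + 1) + (A ^ 2 + 1), fun m k => ?_⟩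
  set t := a * m + b * k + d
  set N : ℝ := m + k + 1
  have hm : (0 : ℝ) ≤ m := m.cast_nonneg
  have hk : (0 : ℝ) ≤ k := k.cast_nonneg
  have hdt : d ≤ t := by nlinarith
  have htN : t ≤ A * N := by nlinarith
  have hGamma := hC t hdt
  have hC0 : 0 ≤ C := nonneg_of_mul_nonneg_left ((abs_nonneg _).trans hGamma) (by linarith)
  have hlog := abs_mul_log_sub_mul_log_le (hd.trans_le hdt) (by positivity) htN
  calc _ ≤ |log (Gamma t) - t * log t| + |t * log t - t * log N| := abs_sub_le _ _ _
    _ ≤ C * (t + 1) + (A ^ 2 + 1) * N := add_le_add hGamma hlog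
    _ ≤ _ := by nlinarith

theorem eventually_mul_le_mul_sub_one_mul_log {δ : ℝ} (hδ : 0 < δ) (B : ℝ) :
    ∀ᶠ N : ℝ in atTop, B * N ≤ δ * (N - 1) * log N := by
  filter_upwards [eventually_ge_atTop 2, tendsto_log_atTop.eventually_ge_atTop (2 * |B| / δ)]
    with N hN hlog
  rw [div_le_iff₀' hδ] at hlog
  nlinarith [mul_le_mul_of_nonneg_right (le_abs_self B) (by linarith : 0 ≤ N),
    mul_nonneg (by linarith : 0 ≤ N - 2) (abs_nonneg B),
    mul_le_mul_of_nonneg_left hlog (by linarith : 0 ≤ N - 1)]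

theorem tendsto_fst_add_snd_cofinite_atTop :
    Tendsto (fun p : ℕ × ℕ => p.1 + p.2) cofinite atTop := by
  rw [← Nat.cofinite_eq_atTop]
  refine Tendsto.cofinite_of_finite_preimage_singleton fun n => ?_
  exact (Finset.HasAntidiagonal.antidiagonal n).finite_toSet.subset
    fun _ => Finset.HasAntidiagonal.mem_antidiagonal.2

theorem eventually_abs_le_pow_of_log_le {c : ℕ × ℕ → ℝ} (hc : ∀ p, 0 < c p) {δ B : ℝ}
    (hδ : 0 < δ)
    (hlog : ∀ m k : ℕ, log (c (m, k)) ≤ B * (m + k + 1) - δ * (m + k) * log (m + k + 1))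
    {ρ : ℝ} (hρ : 0 < ρ) : ∀ᶠ p in cofinite, |c p| ≤ ρ ^ (p.1 + p.2) := by
  have hN : Tendsto (fun p : ℕ × ℕ => ((p.1 + p.2 : ℕ) : ℝ) + 1) cofinite atTop :=
    tendsto_atTop_add_const_right _ 1
      (tendsto_natCast_atTop_atTop.comp tendsto_fst_add_snd_cofinite_atTop)
  filter_upwards [hN.eventually (eventually_mul_le_mul_sub_one_mul_log hδ (B + |log ρ|))]
    with ⟨m, k⟩ hmk
  rw [abs_of_pos (hc _), ← log_le_log_iff (hc _) (by positivity), log_pow]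
  push_cast at hmk ⊢
  have hlog_ρ : -(m + k) * |log ρ| ≤ (m + k) * log ρ := by
    rw [neg_mul, ← mul_neg]
    exact mul_le_mul_of_nonneg_left (neg_abs_le _) (by positivity)
  linarith [hlog m k, abs_nonneg (log ρ)]

theorem summable_mul_pow_mul_pow_of_eventually_le_pow {c : ℕ × ℕ → ℝ}
    (hc : ∀ ρ > 0, ∀ᶠ p in cofinite, |c p| ≤ ρ ^ (p.1 + p.2)) (x y : ℂ) :
    Summable fun p : ℕ × ℕ => (c p : ℂ) * x ^ p.1 * y ^ p.2 := by
  set R := ‖x‖ + ‖y‖ + 1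
  have hx : (2 * R)⁻¹ * ‖x‖ ≤ 1 / 2 := by
    rw [inv_mul_le_iff₀ (by positivity)]; linarith [norm_nonneg y]
  have hy : (2 * R)⁻¹ * ‖y‖ ≤ 1 / 2 := by
    rw [inv_mul_le_iff₀ (by positivity)]; linarith [norm_nonneg x]
  refine Summable.of_norm_bounded_eventually
    (summable_geometric_two.mul_of_nonneg summable_geometric_two
      (fun _ => by positivity) fun _ => by positivity) ?_
  filter_upwards [hc (2 * R)⁻¹ (by positivity)] with p hp
  calc ‖(c p : ℂ) * x ^ p.1 * y ^ p.2‖ = |c p| * ‖x‖ ^ p.1 * ‖y‖ ^ p.2 := by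
        rw [norm_mul, norm_mul, Complex.norm_real, norm_pow, norm_pow, Real.norm_eq_abs]
    _ ≤ (2 * R)⁻¹ ^ (p.1 + p.2) * ‖x‖ ^ p.1 * ‖y‖ ^ p.2 := by gcongr
    _ = ((2 * R)⁻¹ * ‖x‖) ^ p.1 * ((2 * R)⁻¹ * ‖y‖) ^ p.2 := by ring
    _ ≤ (1 / 2) ^ p.1 * (1 / 2) ^ p.2 := by gcongr

noncomputable def bivariateMittagLefflerCoeff (α₁ α₂ α₃ α₄ β₁ β₂ β₃ γ₁ γ₂ δ₁ δ₂ δ₃ : ℝ)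
    (p : ℕ × ℕ) : ℝ :=
  Gamma (α₁ * p.1 + β₁ * p.2 + γ₁) * Gamma (α₂ * p.1 + γ₂) /
    (Gamma γ₁ * Gamma γ₂ * Gamma (α₃ * p.1 + β₂ * p.2 + δ₁) * Gamma (α₄ * p.1 + δ₂) *
      Gamma (β₃ * p.2 + δ₃))

section

variable {α₁ α₂ α₃ α₄ β₁ β₂ β₃ γ₁ γ₂ δ₁ δ₂ δ₃ : ℝ}

theorem bivariateMittagLefflerCoeff_pos (hα₁ : 0 ≤ α₁) (hα₂ : 0 ≤ α₂) (hα₃ : 0 ≤ α₃)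
    (hα₄ : 0 ≤ α₄) (hβ₁ : 0 ≤ β₁) (hβ₂ : 0 ≤ β₂) (hβ₃ : 0 ≤ β₃) (hγ₁ : 0 < γ₁) (hγ₂ : 0 < γ₂)
    (hδ₁ : 0 < δ₁) (hδ₂ : 0 < δ₂) (hδ₃ : 0 < δ₃) (p : ℕ × ℕ) :
    0 < bivariateMittagLefflerCoeff α₁ α₂ α₃ α₄ β₁ β₂ β₃ γ₁ γ₂ δ₁ δ₂ δ₃ p := by
  unfold bivariateMittagLefflerCoeff
  positivity

theorem log_bivariateMittagLefflerCoeff_le (hα₁ : 0 ≤ α₁) (hα₂ : 0 ≤ α₂) (hα₃ : 0 ≤ α₃)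
    (hα₄ : 0 ≤ α₄) (hβ₁ : 0 ≤ β₁) (hβ₂ : 0 ≤ β₂) (hβ₃ : 0 ≤ β₃) (hγ₁ : 0 < γ₁) (hγ₂ : 0 < γ₂)
    (hδ₁ : 0 < δ₁) (hδ₂ : 0 < δ₂) (hδ₃ : 0 < δ₃)
    (hΔ₁ : 0 < α₃ + α₄ - α₁ - α₂) (hΔ₂ : 0 < β₂ + β₃ - β₁) :
    ∃ δ > 0, ∃ B, ∀ m k : ℕ,
      log (bivariateMittagLefflerCoeff α₁ α₂ α₃ α₄ β₁ β₂ β₃ γ₁ γ₂ δ₁ δ₂ δ₃ (m, k))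
        ≤ B * (m + k + 1) - δ * (m + k) * log (m + k + 1) := by
  obtain ⟨K₁, hK₁⟩ := exists_abs_log_Gamma_affine_sub_le hα₁ hβ₁ hγ₁
  obtain ⟨K₂, hK₂⟩ : ∃ K, ∀ m k : ℕ, |log (Gamma (α₂ * m + γ₂)) -
      (α₂ * m + γ₂) * log (m + k + 1)| ≤ K * (m + k + 1) := by
    simpa using exists_abs_log_Gamma_affine_sub_le hα₂ le_rfl hγ₂
  obtain ⟨K₃, hK₃⟩ := exists_abs_log_Gamma_affine_sub_le hα₃ hβ₂ hδ₁
  obtain ⟨K₄, hK₄⟩ : ∃ K, ∀ m k : ℕ, |log (Gamma (α₄ * m + δ₂)) -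
      (α₄ * m + δ₂) * log (m + k + 1)| ≤ K * (m + k + 1) := by
    simpa using exists_abs_log_Gamma_affine_sub_le hα₄ le_rfl hδ₂
  obtain ⟨K₅, hK₅⟩ : ∃ K, ∀ m k : ℕ, |log (Gamma (β₃ * k + δ₃)) -
      (β₃ * k + δ₃) * log (m + k + 1)| ≤ K * (m + k + 1) := by
    simpa using exists_abs_log_Gamma_affine_sub_le le_rfl hβ₃ hδ₃
  set D := γ₁ + γ₂ - δ₁ - δ₂ - δ₃
  set g := log (Gamma γ₁ * Gamma γ₂)
  set δ := min (α₃ + α₄ - α₁ - α₂) (β₂ + β₃ - β₁)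
  refine ⟨δ, lt_min hΔ₁ hΔ₂, K₁ + K₂ + K₃ + K₄ + K₅ + |D| + |g|, fun m k => ?_⟩
  have hm : (0 : ℝ) ≤ m := m.cast_nonneg
  have hk : (0 : ℝ) ≤ k := k.cast_nonneg
  set N : ℝ := m + k + 1
  have hN : 1 ≤ N := by linarith
  have hL : 0 ≤ log N := log_nonneg hN
  have hLN : log N ≤ N := (log_le_sub_one_of_pos (by linarith)).trans (by linarith)
  have hsplit : log (bivariateMittagLefflerCoeff α₁ α₂ α₃ α₄ β₁ β₂ β₃ γ₁ γ₂ δ₁ δ₂ δ₃ (m, k)) =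
      log (Gamma (α₁ * m + β₁ * k + γ₁)) + log (Gamma (α₂ * m + γ₂)) - g -
        log (Gamma (α₃ * m + β₂ * k + δ₁)) - log (Gamma (α₄ * m + δ₂)) -
        log (Gamma (β₃ * k + δ₃)) := by
    unfold bivariateMittagLefflerCoeff
    rw [log_div, log_mul, log_mul, log_mul, log_mul]
    · ring
    all_goals positivity
  have hexponent : ((α₁ * m + β₁ * k + γ₁) + (α₂ * m + γ₂) - (α₃ * m + β₂ * k + δ₁) -
      (α₄ * m + δ₂) - (β₃ * k + δ₃)) * log N ≤ (|D| - δ * (m + k)) * log N := by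
    refine mul_le_mul_of_nonneg_right ?_ hL
    linarith [le_abs_self D, mul_le_mul_of_nonneg_right (min_le_left _ _ : δ ≤ _) hm,
      mul_le_mul_of_nonneg_right (min_le_right _ _ : δ ≤ _) hk]
  rw [hsplit]
  have := abs_le.1 (hK₁ m k)
  have := abs_le.1 (hK₂ m k)
  have := abs_le.1 (hK₃ m k)
  have := abs_le.1 (hK₄ m k)
  have := abs_le.1 (hK₅ m k)
  linarith [mul_le_mul_of_nonneg_left hLN (abs_nonneg D), neg_abs_le g,
    le_mul_of_one_le_right (abs_nonneg g) hN]

end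

/-- Summability (absolute convergence) of the double series
defining the bivariate Mittag-Leffler type function `E₂` with parameters
`(α₁,β₁,γ₁; α₂,γ₂; α₃,β₂,δ₁; α₄,δ₂; β₃,δ₃)` at any `x, y ∈ ℂ`, provided
`Δ₁ = α₃ + α₄ − α₁ − α₂ > 0` and `Δ₂ = β₂ + β₃ − β₁ > 0`. -/
theorem bivariate_mittagLeffler_summable
    (α₁ α₂ α₃ α₄ β₁ β₂ β₃ γ₁ γ₂ δ₁ δ₂ δ₃ : ℝ)
    (hα₁ : 0 < α₁) (hα₂ : 0 < α₂) (hα₃ : 0 < α₃) (hα₄ : 0 < α₄)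
    (hβ₁ : 0 < β₁) (hβ₂ : 0 < β₂) (hβ₃ : 0 < β₃)
    (hγ₁ : 0 < γ₁) (hγ₂ : 0 < γ₂) (hδ₁ : 0 < δ₁) (hδ₂ : 0 < δ₂) (hδ₃ : 0 < δ₃)
    (hΔ₁ : 0 < α₃ + α₄ - α₁ - α₂) (hΔ₂ : 0 < β₂ + β₃ - β₁)
    (x y : ℂ) :
    Summable (fun mk : ℕ × ℕ =>
      ((Real.Gamma (α₁ * mk.1 + β₁ * mk.2 + γ₁) * Real.Gamma (α₂ * mk.1 + γ₂) /
          (Real.Gamma γ₁ * Real.Gamma γ₂ *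
            Real.Gamma (α₃ * mk.1 + β₂ * mk.2 + δ₁)) : ℝ) : ℂ) *
        (x ^ mk.1 / (Real.Gamma (α₄ * mk.1 + δ₂) : ℂ)) *
        (y ^ mk.2 / (Real.Gamma (β₃ * mk.2 + δ₃) : ℂ))) := by
  have hpos := bivariateMittagLefflerCoeff_pos hα₁.le hα₂.le hα₃.le hα₄.le hβ₁.le hβ₂.le hβ₃.le
    hγ₁ hγ₂ hδ₁ hδ₂ hδ₃
  obtain ⟨δ, hδ, B, hlog⟩ := log_bivariateMittagLefflerCoeff_le hα₁.le hα₂.le hα₃.le hα₄.le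
    hβ₁.le hβ₂.le hβ₃.le hγ₁ hγ₂ hδ₁ hδ₂ hδ₃ hΔ₁ hΔ₂
  refine (summable_mul_pow_mul_pow_of_eventually_le_pow
    (fun ρ hρ => eventually_abs_le_pow_of_log_le hpos hδ hlog hρ) x y).congr fun p => ?_
  simp only [bivariateMittagLefflerCoeff]
  push_cast
  ring
end

section
/- Let α₁, α₂, α₃, α₄, α₅, β₁, β₂, β₃, γ₁, γ₂, γ₃ be positive reals and δ₁, …, δ₈ positive reals. If Δ₁ = α₃ + α₄ + α₅ − α₁ − α₂ > 0, Δ₂ = γ₂ + γ₃ − γ₁ > 0 and Δ₃ = β₂ + β₃ − β₁ > 0, then for every x, y, z ∈ ℂ the triple series ∑_{m,j,k=0}^∞ Γ(α₁m+β₁k+δ₁) Γ(α₂m+γ₁j+δ₂) x^m y^j z^k / (Γ(α₃m+β₂k+δ₃) Γ(α₄m+δ₄) Γ(α₅m+δ₅) Γ(β₃k+δ₆) Γ(γ₂j+δ₇) Γ(γ₃j+δ₈)) converges absolutely (the triply-indexed family of terms is summable over ℕ × ℕ × ℕ). -/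
/-!
Each Gamma factor obeys the crude Stirling estimate `log Γ(s) = s log s + O(1 + s)` for `s`
bounded away from `0`, and for a linear form `s = ∑ aᵢ uᵢ + d` with nonnegative data
`s log s = ∑ aᵢ uᵢ log uᵢ + O(1 + ∑ uᵢ)`. Summing over the eight factors, the `(m, j, k)` term
has modulus at most
`e^{C (1 + m + j + k)} |x|^m |y|^j |z|^k e^{-Δ₁ m log m - Δ₂ j log j - Δ₃ k log k}`,
a product of three summable sequences, because `e^{-Δ n log n}` with `Δ > 0` beats any geometric
growth.
-/

open Real Filter Topology
open scoped Nat

namespace Real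

theorem mul_log_le_mul_log_of_le {w s : ℝ} (hw : 0 ≤ w) (hws : w ≤ s) :
    w * log w ≤ w * log s := by
  rcases hw.eq_or_lt with rfl | hw
  · simp
  · exact mul_le_mul_of_nonneg_left (log_le_log hw hws) hw.le

theorem mul_log_le_mul_log_add {w s : ℝ} (hw : 0 ≤ w) (hws : w ≤ s) :
    w * log s ≤ w * log w + s := by
  rcases hw.eq_or_lt with rfl | hw
  · simpa using hw.trans hws
  · have h := log_le_sub_one_of_pos (div_pos (hw.trans_le hws) hw)
    rw [log_div (hw.trans_le hws).ne' hw.ne'] at h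
    have := mul_le_mul_of_nonneg_left h hw.le
    rw [mul_sub, mul_sub, mul_div_cancel₀ _ hw.ne'] at this
    linarith

theorem abs_mul_mul_log_sub_le {a u s : ℝ} (ha : 0 ≤ a) (hu : 0 ≤ u) (hs : a * u ≤ s) :
    |a * u * log s - a * (u * log u)| ≤ (1 + |log a|) * s := by
  have hscale : a * (u * log u) = a * u * log (a * u) - log a * (a * u) := by
    have := negMulLog_mul a u
    simp only [negMulLog] at this
    linarith
  have hau := mul_nonneg ha hu
  have h₁ := mul_log_le_mul_log_of_le hau hs
  have h₂ := mul_log_le_mul_log_add hau hs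
  have h₃ : |log a * (a * u)| ≤ |log a| * s := by
    rw [abs_mul, abs_of_nonneg hau]
    exact mul_le_mul_of_nonneg_left hs (abs_nonneg _)
  rw [abs_le] at h₃ ⊢
  rw [hscale]
  constructor <;> linarith

theorem log_factorial_le (n : ℕ) : log (n ! : ℝ) ≤ n * log n := by
  rw [← log_pow]
  exact log_le_log (by positivity) (by exact_mod_cast n.factorial_le_pow)

theorem mul_log_sub_le_log_factorial (n : ℕ) : n * log n - n ≤ log (n ! : ℝ) := by
  rcases n.eq_zero_or_pos with rfl | hn
  · simp
  have h := log_le_log (by positivity) (pow_div_factorial_le_exp (n : ℝ) n.cast_nonneg n)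
  rw [log_exp, log_div (by positivity) (by positivity), log_pow] at h
  linarith

theorem log_Gamma_le_mul_log {s : ℝ} (hs : 2 ≤ s) : log (Gamma s) ≤ s * log s := by
  set n := ⌊s⌋₊
  have hn : (2 : ℝ) ≤ n := by exact_mod_cast Nat.le_floor (by exact_mod_cast hs)
  have hns : (n : ℝ) ≤ s := Nat.floor_le (by linarith)
  have hGamma : Gamma s ≤ n ! := by
    rw [← Gamma_nat_eq_factorial]
    exact Gamma_strictMonoOn_Ici.monotoneOn hs (by simp; linarith)
      (Nat.lt_floor_add_one s).le
  calc log (Gamma s) ≤ log (n ! : ℝ) := log_le_log (by positivity) hGamma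
    _ ≤ n * log n := log_factorial_le n
    _ ≤ n * log s := mul_log_le_mul_log_of_le n.cast_nonneg hns
    _ ≤ s * log s := mul_le_mul_of_nonneg_right hns (log_nonneg (by linarith))

theorem mul_log_sub_le_log_Gamma {s : ℝ} (hs : 2 ≤ s) : s * log s - 4 * s ≤ log (Gamma s) := by
  set k := ⌊s - 1⌋₊
  have hk : (1 : ℝ) ≤ k := by exact_mod_cast Nat.le_floor (by push_cast; linarith)
  have hks : (k : ℝ) + 1 ≤ s := by linarith [Nat.floor_le (by linarith : 0 ≤ s - 1)]
  have hsk : s - k ≤ 2 := by linarith [Nat.lt_floor_add_one (s - 1)]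
  have hGamma : (k ! : ℝ) ≤ Gamma s := by
    rw [← Gamma_nat_eq_factorial]
    exact Gamma_strictMonoOn_Ici.monotoneOn (by simp; linarith) hs hks
  have hsplit : s * log s ≤ k * log k + s + (s - k) * log s := by
    linarith [mul_log_le_mul_log_add (w := k) (s := s) (by positivity) (by linarith)]
  have hlog : (s - k) * log s ≤ 2 * (s - 1) :=
    mul_le_mul hsk (log_le_sub_one_of_pos (by linarith)) (log_nonneg (by linarith)) (by norm_num)
  linarith [mul_log_sub_le_log_factorial k, log_le_log (by positivity) hGamma]

theorem abs_log_Gamma_sub_mul_log_le {d s : ℝ} (hd : 0 < d) (hds : d ≤ s) :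
    |log (Gamma s) - s * log s| ≤ 7 * (1 + s) + |log d| := by
  have hs := hd.trans_le hds
  -- `Γ (s + 2) = (s + 1) s Γ s` reduces to the estimates on `[2, ∞)`.
  have hrec : log (Gamma (s + 2)) = log (s + 1) + (log s + log (Gamma s)) := by
    rw [show s + 2 = s + 1 + 1 by ring, Gamma_add_one (by positivity), Gamma_add_one hs.ne',
      log_mul (by positivity) (by positivity), log_mul hs.ne' (by positivity)]
  have hshift₁ := mul_log_le_mul_log_of_le hs.le (by linarith : s ≤ s + 2)
  have hshift₂ := mul_log_le_mul_log_add hs.le (by linarith : s ≤ s + 2)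
  have hlog₂ := log_le_sub_one_of_pos (by linarith : 0 < s + 2)
  have hlog₂' := log_nonneg (by linarith : 1 ≤ s + 2)
  have hup := log_Gamma_le_mul_log (by linarith : 2 ≤ s + 2)
  have hlow := mul_log_sub_le_log_Gamma (by linarith : 2 ≤ s + 2)
  have hlogs := log_le_log hd hds
  have hlogs' := log_le_sub_one_of_pos hs
  have hlog₁ := log_nonneg (by linarith : 1 ≤ s + 1)
  have hlog₁' := log_le_sub_one_of_pos (by linarith : 0 < s + 1)
  rw [abs_le]
  constructor <;> linarith [neg_abs_le (log d)]

theorem abs_sum_mul_mul_log_sub_le {ι : Type*} (t : Finset ι) {a u : ι → ℝ} {s : ℝ}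
    (ha : ∀ i ∈ t, 0 ≤ a i) (hu : ∀ i ∈ t, 0 ≤ u i) (hs : ∀ i ∈ t, a i * u i ≤ s) :
    |(∑ i ∈ t, a i * u i) * log s - ∑ i ∈ t, a i * (u i * log (u i))|
      ≤ (∑ i ∈ t, (1 + |log (a i)|)) * s := by
  rw [Finset.sum_mul, Finset.sum_mul, ← Finset.sum_sub_distrib]
  exact (Finset.abs_sum_le_sum_abs _ _).trans <| Finset.sum_le_sum fun i hi ↦
    abs_mul_mul_log_sub_le (ha i hi) (hu i hi) (hs i hi)

theorem abs_log_Gamma_sum_mul_add_sub_le {ι : Type*} [Fintype ι] {a u : ι → ℝ}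
    (ha : ∀ i, 0 ≤ a i) (hu : ∀ i, 0 ≤ u i) {d : ℝ} (hd : 0 < d) :
    |log (Gamma (∑ i, a i * u i + d)) - ∑ i, a i * (u i * log (u i))|
      ≤ (7 + (1 + d) * (1 + |log d|) + ∑ i, (1 + |log (a i)|)) * (1 + (∑ i, a i * u i + d)) := by
  have hsum_nonneg : 0 ≤ ∑ i, a i * u i := Finset.sum_nonneg fun i _ ↦ mul_nonneg (ha i) (hu i)
  set s := ∑ i, a i * u i + d with hs
  have hds : d ≤ s := by linarith
  have hΓ := abs_log_Gamma_sub_mul_log_le hd hds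
  have hmain := abs_sum_mul_mul_log_sub_le (s := s) Finset.univ (fun i _ ↦ ha i) (fun i _ ↦ hu i)
    fun i _ ↦ (Finset.single_le_sum (fun j _ ↦ mul_nonneg (ha j) (hu j))
      (Finset.mem_univ i)).trans (by linarith)
  have hlog : |d * log s| ≤ d * (|log d| + s) := by
    rw [abs_mul, abs_of_pos hd]
    refine mul_le_mul_of_nonneg_left (abs_le.2 ⟨?_, ?_⟩) hd.le
    · linarith [neg_abs_le (log d), log_le_log hd hds]
    · linarith [abs_nonneg (log d), log_le_sub_one_of_pos (hd.trans_le hds)]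
  have hsplit : log (Gamma s) - ∑ i, a i * (u i * log (u i)) = (log (Gamma s) - s * log s)
      + ((∑ i, a i * u i) * log s - ∑ i, a i * (u i * log (u i))) + d * log s := by
    rw [hs]; ring
  have hT : 0 ≤ ∑ i, (1 + |log (a i)|) := by positivity
  have hd_log : 0 ≤ d * |log d| := by positivity
  rw [hsplit]
  nlinarith [abs_add_three (log (Gamma s) - s * log s)
    ((∑ i, a i * u i) * log s - ∑ i, a i * (u i * log (u i))) (d * log s), abs_nonneg (log d)]

theorem eventually_abs_log_Gamma_sum_mul_add_sub_le {ι : Type*} [Fintype ι] {a : ι → ℝ}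
    (ha : ∀ i, 0 ≤ a i) {d : ℝ} (hd : 0 < d) :
    ∀ᶠ C in atTop, ∀ u : ι → ℝ, (∀ i, 0 ≤ u i) →
      |log (Gamma (∑ i, a i * u i + d)) - ∑ i, a i * (u i * log (u i))|
        ≤ C * (1 + ∑ i, u i) := by
  set c := 7 + (1 + d) * (1 + |log d|) + ∑ i, (1 + |log (a i)|)
  filter_upwards [eventually_ge_atTop (c * (1 + d + ∑ i, a i))] with C hC u hu
  have hsum_le : ∑ i, a i * u i ≤ (∑ i, a i) * ∑ i, u i := by
    rw [Finset.sum_mul_sum]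
    exact Finset.sum_le_sum fun i _ ↦ Finset.single_le_sum (f := fun j ↦ a i * u j)
      (fun j _ ↦ mul_nonneg (ha i) (hu j)) (Finset.mem_univ i)
  have hA : 0 ≤ ∑ i, a i := Finset.sum_nonneg fun i _ ↦ ha i
  have hU : 0 ≤ ∑ i, u i := Finset.sum_nonneg fun i _ ↦ hu i
  calc _ ≤ c * (1 + (∑ i, a i * u i + d)) := abs_log_Gamma_sum_mul_add_sub_le ha hu hd
    _ ≤ c * ((1 + d + ∑ i, a i) * (1 + ∑ i, u i)) := by
      gcongr
      nlinarith [mul_nonneg hd.le hU]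
    _ ≤ C * (1 + ∑ i, u i) := by rw [← mul_assoc]; gcongr

theorem eventually_abs_log_Gamma_linear_sub_le {a b c d : ℝ} (ha : 0 ≤ a) (hb : 0 ≤ b)
    (hc : 0 ≤ c) (hd : 0 < d) :
    ∀ᶠ C in atTop, ∀ u v w : ℝ, 0 ≤ u → 0 ≤ v → 0 ≤ w →
      |log (Gamma (a * u + b * v + c * w + d))
          - (a * (u * log u) + b * (v * log v) + c * (w * log w))| ≤ C * (1 + u + v + w) := by
  filter_upwards [eventually_abs_log_Gamma_sum_mul_add_sub_le (a := ![a, b, c])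
    (by simp [Fin.forall_fin_succ, *]) hd] with C hC u v w hu hv hw
  simpa [Fin.sum_univ_three, add_assoc] using hC ![u, v, w] (by simp [Fin.forall_fin_succ, *])

end Real

theorem summable_pow_mul_exp_mul_sub_mul_mul_log (r K : ℝ) {Δ : ℝ} (hΔ : 0 < Δ) :
    Summable fun n : ℕ ↦ r ^ n * exp (K * n - Δ * (n * log n)) := by
  have hpow : ∀ n : ℕ, r ^ n * exp (K * n - Δ * (n * log n)) = (r * exp (K - Δ * log n)) ^ n :=
    fun n ↦ by rw [mul_pow, ← exp_nat_mul]; ring_nf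
  have hlim : Tendsto (fun n : ℕ ↦ r * exp (K - Δ * log n)) atTop (𝓝 0) := by
    have hexp : Tendsto (fun n : ℕ ↦ K - Δ * log n) atTop atBot := by
      simp only [sub_eq_add_neg]
      exact tendsto_atBot_add_const_left _ K <| tendsto_neg_atTop_atBot.comp <|
        (tendsto_log_atTop.comp tendsto_natCast_atTop_atTop).const_mul_atTop hΔ
    simpa using (tendsto_exp_atBot.comp hexp).const_mul r
  refine .of_norm_bounded_eventually_nat summable_geometric_two ?_
  filter_upwards [hlim.norm.eventually (eventually_le_nhds (by norm_num : ‖(0 : ℝ)‖ < 1 / 2))]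
    with n hn
  rw [hpow, norm_pow]
  exact pow_le_pow_left₀ (norm_nonneg _) hn n

theorem exists_Gamma_ratio_le {α₁ α₂ α₃ α₄ α₅ β₁ β₂ β₃ γ₁ γ₂ γ₃ δ₁ δ₂ δ₃ δ₄ δ₅ δ₆ δ₇ δ₈ : ℝ}
    (hα₁ : 0 ≤ α₁) (hα₂ : 0 ≤ α₂) (hα₃ : 0 ≤ α₃) (hα₄ : 0 ≤ α₄) (hα₅ : 0 ≤ α₅)
    (hβ₁ : 0 ≤ β₁) (hβ₂ : 0 ≤ β₂) (hβ₃ : 0 ≤ β₃) (hγ₁ : 0 ≤ γ₁) (hγ₂ : 0 ≤ γ₂) (hγ₃ : 0 ≤ γ₃)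
    (hδ₁ : 0 < δ₁) (hδ₂ : 0 < δ₂) (hδ₃ : 0 < δ₃) (hδ₄ : 0 < δ₄) (hδ₅ : 0 < δ₅) (hδ₆ : 0 < δ₆)
    (hδ₇ : 0 < δ₇) (hδ₈ : 0 < δ₈) :
    ∃ C, ∀ u v w : ℝ, 0 ≤ u → 0 ≤ v → 0 ≤ w →
      Gamma (α₁ * u + β₁ * w + δ₁) * Gamma (α₂ * u + γ₁ * v + δ₂) /
          (Gamma (α₃ * u + β₂ * w + δ₃) * Gamma (α₄ * u + δ₄) * Gamma (α₅ * u + δ₅) *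
            Gamma (β₃ * w + δ₆) * Gamma (γ₂ * v + δ₇) * Gamma (γ₃ * v + δ₈))
        ≤ exp C * (exp (C * u - (α₃ + α₄ + α₅ - α₁ - α₂) * (u * log u)) *
            exp (C * v - (γ₂ + γ₃ - γ₁) * (v * log v)) *
            exp (C * w - (β₂ + β₃ - β₁) * (w * log w))) := by
  obtain ⟨C, h₁, h₂, h₃, h₄, h₅, h₆, h₇, h₈⟩ :=
    ((eventually_abs_log_Gamma_linear_sub_le hα₁ le_rfl hβ₁ hδ₁).and <|
      (eventually_abs_log_Gamma_linear_sub_le hα₂ hγ₁ le_rfl hδ₂).and <|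
      (eventually_abs_log_Gamma_linear_sub_le hα₃ le_rfl hβ₂ hδ₃).and <|
      (eventually_abs_log_Gamma_linear_sub_le hα₄ le_rfl le_rfl hδ₄).and <|
      (eventually_abs_log_Gamma_linear_sub_le hα₅ le_rfl le_rfl hδ₅).and <|
      (eventually_abs_log_Gamma_linear_sub_le le_rfl le_rfl hβ₃ hδ₆).and <|
      (eventually_abs_log_Gamma_linear_sub_le le_rfl hγ₂ le_rfl hδ₇).and <|
      (eventually_abs_log_Gamma_linear_sub_le le_rfl hγ₃ le_rfl hδ₈)).exists
  refine ⟨8 * C, fun u v w hu hv hw ↦ ?_⟩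
  simp only [zero_mul, add_zero, zero_add] at h₁ h₂ h₃ h₄ h₅ h₆ h₇ h₈
  simp only [← exp_add]
  rw [← log_le_iff_le_exp (by positivity)]
  simp (disch := positivity) only [log_div, log_mul]
  linarith [(abs_le.1 (h₁ u v w hu hv hw)).2, (abs_le.1 (h₂ u v w hu hv hw)).2,
    (abs_le.1 (h₃ u v w hu hv hw)).1, (abs_le.1 (h₄ u v w hu hv hw)).1,
    (abs_le.1 (h₅ u v w hu hv hw)).1, (abs_le.1 (h₆ u v w hu hv hw)).1,
    (abs_le.1 (h₇ u v w hu hv hw)).1, (abs_le.1 (h₈ u v w hu hv hw)).1]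

/-- Summability (absolute convergence) of the triple series
defining the trivariate Mittag-Leffler type function with parameters
`(α₁,β₁,δ₁; α₂,γ₁,δ₂; α₃,β₂,δ₃; α₄,δ₄; α₅,δ₅; β₃,δ₆; γ₂,δ₇; γ₃,δ₈)` at any
`x, y, z ∈ ℂ`, provided `Δ₁ = α₃+α₄+α₅−α₁−α₂ > 0`, `Δ₂ = γ₂+γ₃−γ₁ > 0` and
`Δ₃ = β₂+β₃−β₁ > 0`.  The index is `(m, j, k) : ℕ × ℕ × ℕ`. -/
theorem trivariate_mittagLeffler_summable
    (α₁ α₂ α₃ α₄ α₅ β₁ β₂ β₃ γ₁ γ₂ γ₃ δ₁ δ₂ δ₃ δ₄ δ₅ δ₆ δ₇ δ₈ : ℝ)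
    (hα₁ : 0 < α₁) (hα₂ : 0 < α₂) (hα₃ : 0 < α₃) (hα₄ : 0 < α₄) (hα₅ : 0 < α₅)
    (hβ₁ : 0 < β₁) (hβ₂ : 0 < β₂) (hβ₃ : 0 < β₃)
    (hγ₁ : 0 < γ₁) (hγ₂ : 0 < γ₂) (hγ₃ : 0 < γ₃)
    (hδ₁ : 0 < δ₁) (hδ₂ : 0 < δ₂) (hδ₃ : 0 < δ₃) (hδ₄ : 0 < δ₄)
    (hδ₅ : 0 < δ₅) (hδ₆ : 0 < δ₆) (hδ₇ : 0 < δ₇) (hδ₈ : 0 < δ₈)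
    (hΔ₁ : 0 < α₃ + α₄ + α₅ - α₁ - α₂) (hΔ₂ : 0 < γ₂ + γ₃ - γ₁)
    (hΔ₃ : 0 < β₂ + β₃ - β₁)
    (x y z : ℂ) :
    Summable (fun mjk : ℕ × ℕ × ℕ =>
      ((Real.Gamma (α₁ * mjk.1 + β₁ * mjk.2.2 + δ₁) *
          Real.Gamma (α₂ * mjk.1 + γ₁ * mjk.2.1 + δ₂) : ℝ) : ℂ) *
        x ^ mjk.1 * y ^ mjk.2.1 * z ^ mjk.2.2 /
        ((Real.Gamma (α₃ * mjk.1 + β₂ * mjk.2.2 + δ₃) *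
          Real.Gamma (α₄ * mjk.1 + δ₄) * Real.Gamma (α₅ * mjk.1 + δ₅) *
          Real.Gamma (β₃ * mjk.2.2 + δ₆) * Real.Gamma (γ₂ * mjk.2.1 + δ₇) *
          Real.Gamma (γ₃ * mjk.2.1 + δ₈) : ℝ) : ℂ)) := by
  obtain ⟨C, hC⟩ := exists_Gamma_ratio_le hα₁.le hα₂.le hα₃.le hα₄.le hα₅.le hβ₁.le hβ₂.le hβ₃.le
    hγ₁.le hγ₂.le hγ₃.le hδ₁ hδ₂ hδ₃ hδ₄ hδ₅ hδ₆ hδ₇ hδ₈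
  have hmajorant := ((summable_pow_mul_exp_mul_sub_mul_mul_log ‖x‖ C hΔ₁).mul_of_nonneg
    ((summable_pow_mul_exp_mul_sub_mul_mul_log ‖y‖ C hΔ₂).mul_of_nonneg
      (summable_pow_mul_exp_mul_sub_mul_mul_log ‖z‖ C hΔ₃) (fun _ ↦ by positivity)
      fun _ ↦ by positivity) (fun _ ↦ by positivity) fun _ ↦ by positivity).mul_left (exp C)
  refine hmajorant.of_norm_bounded fun ⟨m, j, k⟩ ↦ ?_
  dsimp only
  rw [norm_div, norm_mul, norm_mul, norm_mul, norm_pow, norm_pow, norm_pow,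
    Complex.norm_of_nonneg (by positivity), Complex.norm_of_nonneg (by positivity),
    mul_assoc, mul_assoc, mul_div_right_comm]
  calc _ ≤ _ := mul_le_mul_of_nonneg_right
        (hC m j k m.cast_nonneg j.cast_nonneg k.cast_nonneg) (by positivity)
    _ = _ := by ring
end

section
/- Let 0 < β < 1, a < 0, b < 0, δ < 0, q > 0, p > 0 and let M : [0,q] → ℝ be continuous. Define, for 0 ≤ ξ ≤ x ≤ p, M₁(ξ,x) = ∫₀^q M(t) t^β F(a t^β, b(x−ξ), δ t) dt, where F is the trivariate Mittag-Leffler type function with parameters (β,1,β; 1,1,2; β,1,β+1; β,β; 1,1; 1,1; 1,1; 1,2) (i.e. the parameters (γ,1,γ; 1,1,2; β,α,β+1; γ,γ; 1,1; 1,1; 1,1; 1,2) with α = 1 and γ = β). Then M₁ is well defined and continuous on the triangle {(ξ,x) : 0 ≤ ξ ≤ x ≤ p}, and there exists a constant C₂ > 0 such that |M₁(ξ,x)| ≤ C₂ for all 0 ≤ ξ ≤ x ≤ p. -/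
open scoped Nat


/-- The trivariate Mittag-Leffler type function with parameters
`(α₁,β₁,δ₁; α₂,γ₁,δ₂; α₃,β₂,δ₃; α₄,δ₄; α₅,δ₅; β₃,δ₆; γ₂,δ₇; γ₃,δ₈)`. -/
noncomputable def trivML (α₁ β₁ δ₁ α₂ γ₁ δ₂ α₃ β₂ δ₃ α₄ δ₄ α₅ δ₅ β₃ δ₆ γ₂ δ₇ γ₃ δ₈ : ℝ)
    (x y z : ℝ) : ℝ :=
  ∑' mjk : ℕ × ℕ × ℕ,
    Real.Gamma (α₁ * mjk.1 + β₁ * mjk.2.2 + δ₁) *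
      Real.Gamma (α₂ * mjk.1 + γ₁ * mjk.2.1 + δ₂) *
      x ^ mjk.1 * y ^ mjk.2.1 * z ^ mjk.2.2 /
      (Real.Gamma (α₃ * mjk.1 + β₂ * mjk.2.2 + δ₃) * Real.Gamma (α₄ * mjk.1 + δ₄) *
        Real.Gamma (α₅ * mjk.1 + δ₅) * Real.Gamma (β₃ * mjk.2.2 + δ₆) *
        Real.Gamma (γ₂ * mjk.2.1 + δ₇) * Real.Gamma (γ₃ * mjk.2.1 + δ₈))

/-- The kernel `M₁(ξ,x) = ∫₀^q M(t) t^β F(a t^β, b(x−ξ), δ t) dt` of the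
Volterra integral equation, where `F` is the trivariate Mittag-Leffler type
function with parameters `(β,1,β; 1,1,2; β,1,β+1; β,β; 1,1; 1,1; 1,1; 1,2)`
(i.e. the parameters of the paper with `α = 1`, `γ = β`). -/
noncomputable def kernelM₁ (β a b δ q : ℝ) (M : ℝ → ℝ) (ξ x : ℝ) : ℝ :=
  ∫ t in (0 : ℝ)..q, M t * t ^ β *
    trivML β 1 β 1 1 2 β 1 (β + 1) β β 1 1 1 1 1 1 1 2
      (a * t ^ β) (b * (x - ξ)) (δ * t)



/-- Summability of `c^m / Γ(βm+β)`. -/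
lemma aux_summable {β : ℝ} (hβ : 0 < β) {c : ℝ} (hc : 0 ≤ c) :
    Summable (fun m : ℕ => c ^ m / Real.Gamma (β * m + β)) := by
  set d : ℝ := max 1 ((2 * c) ^ (1 / β)) with hd_def
  have hd1 : (1 : ℝ) ≤ d := le_max_left _ _
  have hd0 : (0 : ℝ) ≤ d := by linarith
  have hdβ : 2 * c ≤ d ^ β := by
    calc 2 * c = ((2 * c) ^ (1 / β)) ^ β := by
          rw [← Real.rpow_mul (by linarith), one_div_mul_cancel hβ.ne', Real.rpow_one]
      _ ≤ d ^ β := Real.rpow_le_rpow (Real.rpow_nonneg (by linarith) _) (le_max_right _ _) hβ.le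
  apply summable_of_isBigO_nat (summable_geometric_of_lt_one (by norm_num : (0:ℝ) ≤ 1/2)
    (by norm_num : (1/2 : ℝ) < 1))
  rw [Asymptotics.isBigO_iff]
  refine ⟨Real.exp d * d ^ 2, ?_⟩
  rw [Filter.eventually_atTop]
  refine ⟨⌈3 / β⌉₊, fun m hm => ?_⟩
  set x : ℝ := β * m + β with hx_def
  have hx3 : (3 : ℝ) ≤ x := by
    have h1 : 3 / β ≤ (⌈3 / β⌉₊ : ℝ) := Nat.le_ceil _
    have h2 : (⌈3 / β⌉₊ : ℝ) ≤ (m : ℝ) := Nat.cast_le.mpr hm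
    have : 3 / β * β ≤ (m : ℝ) * β := by nlinarith
    rw [div_mul_cancel₀ _ hβ.ne'] at this
    nlinarith
  have hx0 : (0 : ℝ) < x := by linarith
  set n : ℕ := ⌊x⌋₊ with hn_def
  have hn3 : 3 ≤ n := Nat.le_floor (by exact_mod_cast hx3)
  have hnx : (n : ℝ) ≤ x := Nat.floor_le hx0.le
  have hxn : x ≤ n + 1 := (Nat.lt_floor_add_one x).le
  clear_value n
  obtain ⟨nn, rfl⟩ : ∃ nn, n = nn + 1 := ⟨n - 1, by omega⟩
  have hΓ : (nn ! : ℝ) ≤ Real.Gamma x := by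
    rw [← Real.Gamma_nat_eq_factorial]
    have hnn2 : 2 ≤ nn := by omega
    apply Real.Gamma_strictMonoOn_Ici.monotoneOn
    · rw [Set.mem_Ici]
      have : (2:ℝ) ≤ (nn:ℝ) := by exact_mod_cast hnn2
      linarith
    · exact Set.mem_Ici.mpr (by linarith)
    · exact_mod_cast hnx
  have hΓ0 : (0 : ℝ) < Real.Gamma x := Real.Gamma_pos_of_pos hx0
  have hfact : (0 : ℝ) < (nn ! : ℝ) := by positivity
  -- c^m ≤ exp d * d^2 * (1/2)^m * nn!
  have key : c ^ m ≤ Real.exp d * d ^ 2 * (1 / 2) ^ m * nn ! := by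
    have h1 : c ^ m ≤ (d ^ β / 2) ^ m := by
      apply pow_le_pow_left₀ hc; linarith
    have h2 : (d ^ β / 2) ^ m = d ^ (β * m) * (1 / 2 : ℝ) ^ m := by
      rw [div_pow, ← Real.rpow_natCast (d ^ β), ← Real.rpow_mul hd0]
      rw [div_pow, one_pow]
      ring
    have h3 : d ^ (β * m) ≤ d ^ ((nn : ℝ) + 2) := by
      apply Real.rpow_le_rpow_of_exponent_le hd1
      have : x ≤ (nn : ℝ) + 2 := by push_cast at hxn ⊢; linarith
      linarith
    have h4 : d ^ ((nn : ℝ) + 2) = d ^ (nn : ℕ) * d ^ 2 := by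
      rw [Real.rpow_add (by linarith : (0:ℝ) < d), Real.rpow_natCast, Real.rpow_two]
    have h5 : d ^ (nn : ℕ) ≤ Real.exp d * nn ! := by
      have := Real.pow_div_factorial_le_exp (x := d) hd0 nn
      rw [div_le_iff₀ hfact] at this
      linarith
    have hhalf : (0:ℝ) ≤ (1/2:ℝ) ^ m := by positivity
    calc c ^ m ≤ d ^ (β * m) * (1 / 2 : ℝ) ^ m := by rw [← h2]; exact h1
      _ ≤ (d ^ (nn:ℕ) * d ^ 2) * (1/2:ℝ) ^ m := by rw [← h4]; exact mul_le_mul_of_nonneg_right h3 hhalf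
      _ ≤ (Real.exp d * nn ! * d ^ 2) * (1/2:ℝ)^m := by
          have hd2 : (0:ℝ) ≤ d ^ 2 := by positivity
          exact mul_le_mul_of_nonneg_right (mul_le_mul_of_nonneg_right h5 hd2) hhalf
      _ = Real.exp d * d ^ 2 * (1 / 2) ^ m * nn ! := by ring
  have hcm : (0:ℝ) ≤ c ^ m := by positivity
  have lhs_eq : ‖c ^ m / Real.Gamma x‖ = c ^ m / Real.Gamma x := by
    rw [Real.norm_eq_abs, abs_of_nonneg (by positivity)]
  rw [lhs_eq]
  have rhs_eq : ‖(1/2:ℝ) ^ m‖ = (1/2:ℝ) ^ m := by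
    rw [Real.norm_eq_abs, abs_of_nonneg (by positivity)]
  rw [rhs_eq, div_le_iff₀ hΓ0]
  calc c ^ m ≤ Real.exp d * d ^ 2 * (1 / 2) ^ m * nn ! := key
    _ ≤ Real.exp d * d ^ 2 * (1 / 2) ^ m * Real.Gamma x := by
        apply mul_le_mul_of_nonneg_left hΓ; positivity
    _ = Real.exp d * d ^ 2 * (1 / 2 : ℝ) ^ m * Real.Gamma x := by ring

lemma nat_choose_le_two_pow (n k : ℕ) : n.choose k ≤ 2 ^ n := by
  rcases le_or_gt k n with h | h
  · calc n.choose k ≤ ∑ i ∈ Finset.range (n+1), n.choose i :=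
        Finset.single_le_sum (fun i _ => Nat.zero_le _) (Finset.mem_range.mpr (by omega))
      _ = 2 ^ n := Nat.sum_range_choose n
  · rw [Nat.choose_eq_zero_of_lt h]; exact Nat.zero_le _

/-- The general term of the triple series defining `trivML β 1 β 1 1 2 β 1 (β+1) β β 1 1 1 1 1 1 1 2`. -/
noncomputable def mlTerm (β : ℝ) (n : ℕ × ℕ × ℕ) (v : ℝ × ℝ × ℝ) : ℝ :=
  Real.Gamma (β * n.1 + 1 * n.2.2 + β) * Real.Gamma (1 * n.1 + 1 * n.2.1 + 2) *
      v.1 ^ n.1 * v.2.1 ^ n.2.1 * v.2.2 ^ n.2.2 /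
    (Real.Gamma (β * n.1 + 1 * n.2.2 + (β + 1)) * Real.Gamma (β * n.1 + β) *
      Real.Gamma (1 * n.1 + 1) * Real.Gamma (1 * n.2.2 + 1) *
      Real.Gamma (1 * n.2.1 + 1) * Real.Gamma (1 * n.2.1 + 2))


/-- The dominating summable bound. -/
noncomputable def mlBound (β R : ℝ) (n : ℕ × ℕ × ℕ) : ℝ :=
  (2 / β * ((2 * R) ^ n.1 / Real.Gamma (β * n.1 + β))) *
    ((2 * R) ^ n.2.1 / (n.2.1)! * (R ^ n.2.2 / (n.2.2)!))

set_option maxHeartbeats 1000000 in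
lemma mlBound_summable {β : ℝ} (hβ : 0 < β) {R : ℝ} (hR : 0 ≤ R) :
    Summable (mlBound β R) := by
  have h2R : (0:ℝ) ≤ 2 * R := by linarith
  have hf : Summable (fun m : ℕ => 2 / β * ((2 * R) ^ m / Real.Gamma (β * m + β))) :=
    (aux_summable hβ h2R).mul_left _
  have hg : Summable (fun jk : ℕ × ℕ => (2 * R) ^ jk.1 / (jk.1)! * (R ^ jk.2 / (jk.2)!)) :=
    (Real.summable_pow_div_factorial (2 * R)).mul_of_nonneg
      (Real.summable_pow_div_factorial R)
      (fun j => by positivity) (fun k => by positivity)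
  have hp1 : ∀ m : ℕ, 0 ≤ 2 / β * ((2 * R) ^ m / Real.Gamma (β * m + β)) := by
    intro m
    have hΓ := Real.Gamma_pos_of_pos (show (0:ℝ) < β * m + β by positivity)
    have h2β : 0 < 2 / β := by positivity
    positivity
  have hp2 : ∀ jk : ℕ × ℕ, 0 ≤ (2 * R) ^ jk.1 / (jk.1)! * (R ^ jk.2 / (jk.2)!) := by
    intro jk
    have f1 : (0:ℝ) < (jk.1)! := by exact_mod_cast Nat.factorial_pos _
    have f2 : (0:ℝ) < (jk.2)! := by exact_mod_cast Nat.factorial_pos _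
    positivity
  exact (hf.mul_of_nonneg hg hp1 hp2).congr (fun n => rfl)

set_option maxHeartbeats 1000000 in
lemma mlTerm_bound {β : ℝ} (hβ : 0 < β) {R : ℝ} (hR : 1 ≤ R) (n : ℕ × ℕ × ℕ)
    (v : ℝ × ℝ × ℝ) (h1 : |v.1| ≤ R) (h2 : |v.2.1| ≤ R) (h3 : |v.2.2| ≤ R) :
    |mlTerm β n v| ≤ mlBound β R n := by
  obtain ⟨m, j, k⟩ := n
  obtain ⟨x, y, z⟩ := v
  simp only [mlTerm, mlBound]
  have hR0 : (0:ℝ) ≤ R := by linarith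
  set A := Real.Gamma (β * m + 1 * k + β) with hA_def
  set B := Real.Gamma (1 * m + 1 * j + 2) with hB_def
  have hargA : (0:ℝ) < β * m + 1 * k + β := by positivity
  have hA : 0 < A := Real.Gamma_pos_of_pos hargA
  have hA' : Real.Gamma (β * m + 1 * k + (β + 1)) = (β * m + 1 * k + β) * A := by
    rw [hA_def, ← Real.Gamma_add_one hargA.ne']; ring_nf
  have hG1 : 0 < Real.Gamma (β * m + β) := Real.Gamma_pos_of_pos (by positivity)
  have hB_eq : B = ((m + j + 1)! : ℝ) := by
    rw [hB_def, ← Real.Gamma_nat_eq_factorial]; push_cast; ring_nf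
  have hGm : Real.Gamma (1 * (m:ℝ) + 1) = (m ! : ℝ) := by
    rw [← Real.Gamma_nat_eq_factorial]; push_cast; ring_nf
  have hGk : Real.Gamma (1 * (k:ℝ) + 1) = (k ! : ℝ) := by
    rw [← Real.Gamma_nat_eq_factorial]; push_cast; ring_nf
  have hGj : Real.Gamma (1 * (j:ℝ) + 1) = (j ! : ℝ) := by
    rw [← Real.Gamma_nat_eq_factorial]; push_cast; ring_nf
  have hGj2 : Real.Gamma (1 * (j:ℝ) + 2) = ((j+1)! : ℝ) := by
    rw [← Real.Gamma_nat_eq_factorial]; push_cast; ring_nf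
  -- choose bound
  have hchoose : ((m + j + 1)! : ℝ) ≤ 2 ^ (m + j + 1) * (m ! : ℝ) * ((j+1)! : ℝ) := by
    have h₁ : (m + j + 1).choose m * m ! * (j+1)! = (m + j + 1)! := by
      have := Nat.choose_mul_factorial_mul_factorial (show m ≤ m + j + 1 by omega)
      simpa [show m + j + 1 - m = j + 1 by omega] using this
    have h₂ : (m + j + 1).choose m ≤ 2 ^ (m + j + 1) := nat_choose_le_two_pow _ _
    calc ((m + j + 1)! : ℝ) = ((m + j + 1).choose m : ℝ) * m ! * (j+1)! := by
          exact_mod_cast congrArg (Nat.cast (R := ℝ)) h₁.symm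
      _ ≤ 2 ^ (m + j + 1) * (m ! : ℝ) * ((j+1)! : ℝ) := by
          have : ((m + j + 1).choose m : ℝ) ≤ (2:ℝ) ^ (m + j + 1) := by exact_mod_cast h₂
          have hm : (0:ℝ) < (m ! : ℝ) := by exact_mod_cast Nat.factorial_pos m
          have hj : (0:ℝ) < ((j+1)! : ℝ) := by exact_mod_cast Nat.factorial_pos (j+1)
          exact mul_le_mul_of_nonneg_right (mul_le_mul_of_nonneg_right this hm.le) hj.le
  -- rewrite goal
  have hB : 0 < B := by rw [hB_eq]; exact_mod_cast Nat.factorial_pos _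
  have hmf : (0:ℝ) < (m ! : ℝ) := by exact_mod_cast Nat.factorial_pos m
  have hkf : (0:ℝ) < (k ! : ℝ) := by exact_mod_cast Nat.factorial_pos k
  have hjf : (0:ℝ) < (j ! : ℝ) := by exact_mod_cast Nat.factorial_pos j
  have hj1f : (0:ℝ) < ((j+1)! : ℝ) := by exact_mod_cast Nat.factorial_pos (j+1)
  have hD : (0:ℝ) < Real.Gamma (β * m + 1 * k + (β + 1)) * Real.Gamma (β * m + β) *
      Real.Gamma (1 * m + 1) * Real.Gamma (1 * k + 1) *
      Real.Gamma (1 * j + 1) * Real.Gamma (1 * j + 2) := by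
    rw [hA', hGm, hGk, hGj, hGj2]; positivity
  rw [abs_div, abs_mul, abs_mul, abs_mul, abs_mul, abs_pow, abs_pow, abs_pow,
    abs_of_pos hA, abs_of_pos hB, abs_of_pos hD]
  have hxm : |x| ^ m ≤ R ^ m := pow_le_pow_left₀ (abs_nonneg _) h1 m
  have hyj : |y| ^ j ≤ R ^ j := pow_le_pow_left₀ (abs_nonneg _) h2 j
  have hzk : |z| ^ k ≤ R ^ k := pow_le_pow_left₀ (abs_nonneg _) h3 k
  have hnum : A * B * |x| ^ m * |y| ^ j * |z| ^ k
      ≤ A * (2 ^ (m + j + 1) * (m ! : ℝ) * ((j+1)! : ℝ)) * R ^ m * R ^ j * R ^ k := by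
    gcongr
    · rw [hB_eq]; exact hchoose
  have hden : β * A * Real.Gamma (β * m + β) * (m ! : ℝ) * (k ! : ℝ) * (j ! : ℝ) * ((j+1)! : ℝ)
      ≤ Real.Gamma (β * m + 1 * k + (β + 1)) * Real.Gamma (β * m + β) *
        Real.Gamma (1 * m + 1) * Real.Gamma (1 * k + 1) *
        Real.Gamma (1 * j + 1) * Real.Gamma (1 * j + 2) := by
    rw [hA', hGm, hGk, hGj, hGj2]
    have hβA : β * A ≤ (β * m + 1 * k + β) * A := by
      have hmk : (0:ℝ) ≤ β * m + 1 * k := by positivity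
      nlinarith
    have hrest : (0:ℝ) < Real.Gamma (β * m + β) * (m ! : ℝ) * (k ! : ℝ) * (j ! : ℝ) * ((j+1)! : ℝ) := by
      positivity
    nlinarith [mul_le_mul_of_nonneg_right hβA hrest.le]
  have hdlow : (0:ℝ) < β * A * Real.Gamma (β * m + β) * (m ! : ℝ) * (k ! : ℝ) * (j ! : ℝ) * ((j+1)! : ℝ) := by
    positivity
  calc A * B * |x| ^ m * |y| ^ j * |z| ^ k /
        (Real.Gamma (β * m + 1 * k + (β + 1)) * Real.Gamma (β * m + β) *
          Real.Gamma (1 * m + 1) * Real.Gamma (1 * k + 1) *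
          Real.Gamma (1 * j + 1) * Real.Gamma (1 * j + 2))
      ≤ (A * (2 ^ (m + j + 1) * (m ! : ℝ) * ((j+1)! : ℝ)) * R ^ m * R ^ j * R ^ k) /
        (β * A * Real.Gamma (β * m + β) * (m ! : ℝ) * (k ! : ℝ) * (j ! : ℝ) * ((j+1)! : ℝ)) := by
        apply div_le_div₀ (by positivity) hnum hdlow hden
    _ = 2 / β * ((2 * R) ^ m / Real.Gamma (β * m + β)) *
          ((2 * R) ^ j / (j)! * (R ^ k / (k)!)) := by
        field_simp
        ring

lemma trivML_eq_tsum_mlTerm (β x y z : ℝ) :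
    trivML β 1 β 1 1 2 β 1 (β + 1) β β 1 1 1 1 1 1 1 2 x y z
      = ∑' n : ℕ × ℕ × ℕ, mlTerm β n (x, y, z) := rfl

lemma mlTerm_continuous (β : ℝ) (n : ℕ × ℕ × ℕ) :
    Continuous (fun v : ℝ × ℝ × ℝ => mlTerm β n v) := by
  unfold mlTerm
  exact ((((continuous_const.mul continuous_const).mul (continuous_fst.pow n.1)).mul
    ((continuous_fst.comp continuous_snd).pow n.2.1)).mul
    ((continuous_snd.comp continuous_snd).pow n.2.2)).div_const _

lemma trivML_continuous {β : ℝ} (hβ : 0 < β) :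
    Continuous (fun v : ℝ × ℝ × ℝ => ∑' n : ℕ × ℕ × ℕ, mlTerm β n v) := by
  rw [continuous_iff_continuousAt]
  intro v₀
  set R : ℝ := max 1 (‖v₀‖ + 1) with hR_def
  have hR1 : (1:ℝ) ≤ R := le_max_left _ _
  have hball : Metric.closedBall (0 : ℝ × ℝ × ℝ) R ∈ nhds v₀ := by
    apply Metric.closedBall_mem_nhds_of_mem
    rw [Metric.mem_ball, dist_zero_right]
    have h2 : ‖v₀‖ + 1 ≤ R := le_max_right _ _
    linarith
  apply ContinuousOn.continuousAt ?_ hball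
  rw [continuousOn_iff_continuous_restrict]
  apply continuous_tsum (u := mlBound β R)
    (fun n => (mlTerm_continuous β n).comp continuous_subtype_val)
    (mlBound_summable hβ (le_trans zero_le_one hR1))
  intro n v
  have hv : ‖(v : ℝ × ℝ × ℝ)‖ ≤ R := by
    have := v.2
    rwa [Metric.mem_closedBall, dist_zero_right] at this
  have h1 : |(v : ℝ × ℝ × ℝ).1| ≤ R := by
    rw [← Real.norm_eq_abs]; exact le_trans (norm_fst_le _) hv
  have h2 : |(v : ℝ × ℝ × ℝ).2.1| ≤ R := by
    rw [← Real.norm_eq_abs]; exact le_trans (le_trans (norm_fst_le _) (norm_snd_le _)) hv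
  have h3 : |(v : ℝ × ℝ × ℝ).2.2| ≤ R := by
    rw [← Real.norm_eq_abs]; exact le_trans (le_trans (norm_snd_le _) (norm_snd_le _)) hv
  exact mlTerm_bound hβ hR1 n _ h1 h2 h3

/-- for `0 < β < 1`, `a < 0`, `b < 0`, `δ < 0`, `q > 0`, `p > 0`
and continuous `M` on `[0,q]`, the kernel `M₁` is continuous on the triangle
`{(ξ,x) : 0 ≤ ξ ≤ x ≤ p}` and uniformly bounded there by some constant `C₂ > 0`. -/
theorem kernelM₁_continuous_and_bounded (β a b δ q p : ℝ)
    (hβ₀ : 0 < β) (hβ₁ : β < 1) (ha : a < 0) (hb : b < 0) (hδ : δ < 0)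
    (hq : 0 < q) (hp : 0 < p) (M : ℝ → ℝ)
    (hM : ContinuousOn M (Set.Icc 0 q)) :
    ContinuousOn (fun w : ℝ × ℝ => kernelM₁ β a b δ q M w.1 w.2)
        {w : ℝ × ℝ | 0 ≤ w.1 ∧ w.1 ≤ w.2 ∧ w.2 ≤ p} ∧
      ∃ C₂ > 0, ∀ ξ x : ℝ, 0 ≤ ξ → ξ ≤ x → x ≤ p →
        |kernelM₁ β a b δ q M ξ x| ≤ C₂ := by
  -- Tietze extension of M to all of ℝ
  obtain ⟨g, hg⟩ := ContinuousMap.exists_restrict_eq (Y := ℝ) (isClosed_Icc (a := (0:ℝ)) (b := q))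
    ⟨_, continuousOn_iff_continuous_restrict.mp hM⟩
  have hgM : ∀ t ∈ Set.Icc (0:ℝ) q, g t = M t := by
    intro t ht
    have := congrFun (congrArg ContinuousMap.toFun hg) ⟨t, ht⟩
    simpa using this
  -- continuity of t ↦ t ^ β
  have hrpow : Continuous fun t : ℝ => t ^ β := by
    rw [continuous_iff_continuousAt]
    intro t
    exact Real.continuousAt_rpow_const t β (Or.inr hβ₀.le)
  set F := fun v : ℝ × ℝ × ℝ => ∑' n : ℕ × ℕ × ℕ, mlTerm β n v with hF_def
  have hF : Continuous F := trivML_continuous hβ₀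
  -- the smooth integrand
  set f : (ℝ × ℝ) → ℝ → ℝ :=
    fun w t => g t * t ^ β * F (a * t ^ β, b * (w.2 - w.1), δ * t) with hf_def
  have hfc : Continuous (Function.uncurry f) := by
    apply Continuous.mul
    · exact (g.continuous.comp continuous_snd).mul (hrpow.comp continuous_snd)
    · apply hF.comp
      refine Continuous.prodMk ?_ (Continuous.prodMk ?_ ?_)
      · exact continuous_const.mul (hrpow.comp continuous_snd)
      · exact continuous_const.mul
          (((continuous_snd.comp continuous_fst).sub (continuous_fst.comp continuous_fst)))
      · exact continuous_const.mul continuous_snd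
  have hcont : Continuous fun w : ℝ × ℝ => ∫ t in (0:ℝ)..q, f w t :=
    intervalIntegral.continuous_parametric_intervalIntegral_of_continuous' hfc 0 q
  have hker : ∀ w : ℝ × ℝ, kernelM₁ β a b δ q M w.1 w.2 = ∫ t in (0:ℝ)..q, f w t := by
    intro w
    unfold kernelM₁
    apply intervalIntegral.integral_congr
    intro t ht
    rw [Set.uIcc_of_le hq.le] at ht
    beta_reduce
    rw [trivML_eq_tsum_mlTerm, ← hgM t ht]
  have hkc : Continuous fun w : ℝ × ℝ => kernelM₁ β a b δ q M w.1 w.2 := by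
    simpa [← hker] using hcont
  constructor
  · exact hkc.continuousOn
  · -- boundedness on the compact triangle
    set T : Set (ℝ × ℝ) := {w : ℝ × ℝ | 0 ≤ w.1 ∧ w.1 ≤ w.2 ∧ w.2 ≤ p} with hT_def
    have hTclosed : IsClosed T := by
      have h1 : IsClosed {w : ℝ × ℝ | 0 ≤ w.1} := isClosed_le continuous_const continuous_fst
      have h2 : IsClosed {w : ℝ × ℝ | w.1 ≤ w.2} := isClosed_le continuous_fst continuous_snd
      have h3 : IsClosed {w : ℝ × ℝ | w.2 ≤ p} := isClosed_le continuous_snd continuous_const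
      exact (h1.inter (h2.inter h3))
    have hTsub : T ⊆ Set.Icc ((0:ℝ), (0:ℝ)) (p, p) := by
      rintro ⟨ξ, x⟩ ⟨h1, h2, h3⟩
      constructor
      · exact ⟨h1, le_trans h1 h2⟩
      · exact ⟨le_trans h2 h3, h3⟩
    have hTcompact : IsCompact T := IsCompact.of_isClosed_subset isCompact_Icc hTclosed hTsub
    obtain ⟨C, hC⟩ := hTcompact.exists_bound_of_continuousOn hkc.continuousOn
    refine ⟨max C 1, lt_of_lt_of_le zero_lt_one (le_max_right _ _), ?_⟩
    intro ξ x h1 h2 h3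
    have := hC (ξ, x) ⟨h1, h2, h3⟩
    calc |kernelM₁ β a b δ q M ξ x| = ‖(fun w : ℝ × ℝ => kernelM₁ β a b δ q M w.1 w.2) (ξ, x)‖ := by
          rw [Real.norm_eq_abs]
      _ ≤ C := this
      _ ≤ max C 1 := le_max_left _ _
end
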